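/- arXiv:1005.5431 — 2 statements merged into one kernel-verified Lean document; each statement's English description precedes it below -/
import Mathlib

section
/- Let n > 1 be odd. In the graded ring H = ℤ[y₁,y₂]/⟨y₁ⁿ(y₁+y₂), y₂(2y₁+y₂)⟩, for all integers c, d one has (c·y₁ + d·y₂)^(n+1) = ((c^(n+1) + (c−2d)^(n+1))/2)·y₁^(n+1), and consequently (c·y₁+d·y₂)^(n+1) = 0 implies c = d = 0. -/
/-!
Put `x = y₁` and `u = y₁ + y₂`; the relations become `u² = x²` and `xⁿu = 0`. Since `u² = x²`,
linear forms `p x + q u` multiply like the elements `p + q√1` of `ℤ√1`, up to a factor of `x`.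
Hence `(c y₁ + d y₂)ⁿ⁺¹ = xⁿ(A x + B u) = A xⁿ⁺¹` where `A + B√1 = ((c - d) + d√1)ⁿ⁺¹`, and the
two ring maps `ℤ√1 → ℤ`, `√1 ↦ ±1`, give `2A = cⁿ⁺¹ + (c - 2d)ⁿ⁺¹`.

If `A xⁿ⁺¹ = P xⁿ(x + y₂) + Q y₂(2x + y₂)`, restricting to the lines `y₂ = 0` and `y₂ = -2x`
gives `P(t, 0) = A` and `P(t, -2t) = -A` in `ℤ[t]`, and comparing constant terms yields `A = 0`.
For odd `n` the exponent `n + 1` is even, so both powers vanish.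
-/

open MvPolynomial

namespace Zsqrtd

variable {S : Type*} [CommRing S] {d : ℤ} {a u : S}

theorem re_mul_add_im_mul_mul (hu : u * u = d * (a * a)) (z w : ℤ√d) :
    (z.re * a + z.im * u) * (w.re * a + w.im * u) = a * ((z * w).re * a + (z * w).im * u) := by
  simp only [re_mul, im_mul]
  push_cast
  linear_combination (z.im * w.im : S) * hu

theorem re_mul_add_im_mul_pow_succ (hu : u * u = d * (a * a)) (z : ℤ√d) (m : ℕ) :
    (z.re * a + z.im * u) ^ (m + 1) = a ^ m * ((z ^ (m + 1)).re * a + (z ^ (m + 1)).im * u) := by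
  induction m with
  | zero => simp
  | succ m ih =>
    rw [pow_succ, ih, mul_assoc, re_mul_add_im_mul_mul hu, pow_succ _ (m + 1)]
    ring

theorem two_mul_re_pow (z : ℤ√1) (m : ℕ) :
    2 * (z ^ m).re = (z.re + z.im) ^ m + (z.re - z.im) ^ m := by
  have hplus := map_pow (lift (R := ℤ) (d := 1) ⟨1, rfl⟩) z m
  have hminus := map_pow (lift (R := ℤ) (d := 1) ⟨-1, rfl⟩) z m
  simp only [lift_apply_apply] at hplus hminus
  linear_combination hplus + hminus

end Zsqrtd

theorem eq_zero_and_eq_zero_of_pow_add_pow_eq_zero {R : Type*} [Ring R] [LinearOrder R]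
    [IsStrictOrderedRing R] {m : ℕ} (hm : Even m) (hm0 : m ≠ 0) {x y : R}
    (h : x ^ m + y ^ m = 0) : x = 0 ∧ y = 0 := by
  obtain ⟨hx, hy⟩ := (add_eq_zero_iff_of_nonneg (hm.pow_nonneg x) (hm.pow_nonneg y)).mp h
  exact ⟨(pow_eq_zero_iff hm0).mp hx, (pow_eq_zero_iff hm0).mp hy⟩

noncomputable abbrev relIdeal (n : ℕ) : Ideal (MvPolynomial (Fin 2) ℤ) :=
  Ideal.span {X 0 ^ n * (X 0 + X 1), X 1 * (2 * X 0 + X 1)}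

section Quotient

variable (n : ℕ)

local notation "mk" => Ideal.Quotient.mk (relIdeal n)

theorem mk_C (r : ℤ) : mk (C r) = r := by
  rw [← MvPolynomial.algebraMap_eq, eq_intCast, map_intCast]

theorem mk_X_zero_add_X_one_mul_self :
    mk (X 0 + X 1) * mk (X 0 + X 1) = mk (X 0) * mk (X 0) := by
  rw [← map_mul, ← map_mul, Ideal.Quotient.eq]
  exact Ideal.subset_span (Set.mem_insert_of_mem _ (Set.mem_singleton_iff.mpr (by ring)))

theorem mk_X_zero_pow_mul_X_zero_add_X_one : mk (X 0) ^ n * mk (X 0 + X 1) = 0 := by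
  rw [← map_pow, ← map_mul, Ideal.Quotient.eq_zero_iff_mem]
  exact Ideal.subset_span (Set.mem_insert _ _)

theorem mk_linear_pow_succ (c d : ℤ) :
    mk (C c * X 0 + C d * X 1) ^ (n + 1) =
      mk (C ((c ^ (n + 1) + (c - 2 * d) ^ (n + 1)) / 2) * X 0 ^ (n + 1)) := by
  set z : ℤ√1 := ⟨c - d, d⟩
  have hlin : mk (C c * X 0 + C d * X 1) = z.re * mk (X 0) + z.im * mk (X 0 + X 1) := by
    simp only [z, map_add, map_mul, mk_C]
    push_cast
    ring
  have hre : (z ^ (n + 1)).re = (c ^ (n + 1) + (c - 2 * d) ^ (n + 1)) / 2 := by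
    have h2 : 2 * (z ^ (n + 1)).re = c ^ (n + 1) + (c - 2 * d) ^ (n + 1) := by
      rw [Zsqrtd.two_mul_re_pow]
      show (c - d + d) ^ (n + 1) + (c - d - d) ^ (n + 1) = _
      ring
    rw [← h2, Int.mul_ediv_cancel_left _ two_ne_zero]
  have hu : mk (X 0 + X 1) * mk (X 0 + X 1) = ((1 : ℤ) : _) * (mk (X 0) * mk (X 0)) := by
    rw [Int.cast_one, one_mul, mk_X_zero_add_X_one_mul_self]
  rw [hlin, Zsqrtd.re_mul_add_im_mul_pow_succ hu, ← hre, map_mul, map_pow, mk_C]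
  linear_combination ((z ^ (n + 1)).im : _) * mk_X_zero_pow_mul_X_zero_add_X_one n

theorem eq_zero_of_C_mul_X_zero_pow_mem_relIdeal {e : ℤ}
    (he : C e * X 0 ^ (n + 1) ∈ relIdeal n) : e = 0 := by
  obtain ⟨p, q, hpq⟩ := Ideal.mem_span_pair.mp he
  set t : Polynomial ℤ := Polynomial.X
  have ht : t ^ (n + 1) ≠ 0 := pow_ne_zero _ Polynomial.X_ne_zero
  have on_y_eq_zero : aeval ![t, 0] p = e := by
    have h := congrArg (aeval ![t, 0]) hpq
    simp only [map_add, map_mul, map_pow, aeval_X, eq_intCast, map_intCast, Matrix.cons_val_zero,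
      Matrix.cons_val_one, Matrix.cons_val_fin_one, add_zero, zero_mul, mul_zero] at h
    exact mul_right_cancel₀ ht (by linear_combination h)
  have on_y_eq_neg_two_x : aeval ![t, -(2 * t)] p = -e := by
    have h := congrArg (aeval ![t, -(2 * t)]) hpq
    simp only [map_add, map_mul, map_pow, aeval_X, eq_intCast, map_intCast, aeval_ofNat,
      Matrix.cons_val_zero, Matrix.cons_val_one, Matrix.cons_val_fin_one, add_neg_cancel,
      mul_zero, add_zero] at h
    exact mul_right_cancel₀ ht (by linear_combination -h)
  have same_constant_term : Polynomial.aeval (0 : ℤ) (aeval ![t, 0] p) =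
      Polynomial.aeval (0 : ℤ) (aeval ![t, -(2 * t)] p) := by
    simp only [comp_aeval_apply]
    refine congrArg (fun g => aeval g p) (funext fun i => ?_)
    fin_cases i <;> simp [t]
  rw [on_y_eq_zero, on_y_eq_neg_two_x, map_neg, map_intCast, Int.cast_id] at same_constant_term
  omega

end Quotient

theorem stmt4_general (n : ℕ) (hodd : Odd n) (c d : ℤ) :
    (Ideal.Quotient.mk
        (Ideal.span {(X 0 : MvPolynomial (Fin 2) ℤ) ^ n * (X 0 + X 1), X 1 * (2 * X 0 + X 1)})
        (C c * X 0 + C d * X 1)) ^ (n + 1) =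
      Ideal.Quotient.mk
        (Ideal.span {(X 0 : MvPolynomial (Fin 2) ℤ) ^ n * (X 0 + X 1), X 1 * (2 * X 0 + X 1)})
        (C ((c ^ (n + 1) + (c - 2 * d) ^ (n + 1)) / 2) * X 0 ^ (n + 1)) ∧
    ((Ideal.Quotient.mk
        (Ideal.span {(X 0 : MvPolynomial (Fin 2) ℤ) ^ n * (X 0 + X 1), X 1 * (2 * X 0 + X 1)})
        (C c * X 0 + C d * X 1)) ^ (n + 1) = 0 → c = 0 ∧ d = 0) := by
  refine ⟨mk_linear_pow_succ n c d, fun h => ?_⟩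
  rw [mk_linear_pow_succ, Ideal.Quotient.eq_zero_iff_mem] at h
  have hhalf := eq_zero_of_C_mul_X_zero_pow_mem_relIdeal n h
  have heven : Even (c ^ (n + 1) + (c - 2 * d) ^ (n + 1)) := by simp [parity_simps]
  have hsum : c ^ (n + 1) + (c - 2 * d) ^ (n + 1) = 0 := by
    obtain ⟨k, hk⟩ := heven
    omega
  obtain ⟨hc, hcd⟩ :=
    eq_zero_and_eq_zero_of_pow_add_pow_eq_zero hodd.add_one n.succ_ne_zero hsum
  exact ⟨hc, by omega⟩

theorem stmt4 (n : ℕ) (hn : 1 < n) (hodd : Odd n) (c d : ℤ) :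
    (Ideal.Quotient.mk
        (Ideal.span {(X 0 : MvPolynomial (Fin 2) ℤ) ^ n * (X 0 + X 1), X 1 * (2 * X 0 + X 1)})
        (C c * X 0 + C d * X 1)) ^ (n + 1) =
      Ideal.Quotient.mk
        (Ideal.span {(X 0 : MvPolynomial (Fin 2) ℤ) ^ n * (X 0 + X 1), X 1 * (2 * X 0 + X 1)})
        (C ((c ^ (n + 1) + (c - 2 * d) ^ (n + 1)) / 2) * X 0 ^ (n + 1)) ∧
    ((Ideal.Quotient.mk
        (Ideal.span {(X 0 : MvPolynomial (Fin 2) ℤ) ^ n * (X 0 + X 1), X 1 * (2 * X 0 + X 1)})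
        (C c * X 0 + C d * X 1)) ^ (n + 1) = 0 → c = 0 ∧ d = 0) :=
  stmt4_general n hodd c d
end

section
/- For n > 1, the graded rings ℤ[x₁,x₂]/⟨x₁ⁿ(x₁+2x₂), x₂(x₁+x₂)⟩ and ℤ[y₁,y₂]/⟨y₁ⁿ(y₁+y₂), y₂(2y₁+y₂)⟩ are not isomorphic as graded rings. -/
open MvPolynomial

def IsGradedIso (I J : Ideal (MvPolynomial (Fin 2) ℤ)) : Prop :=
  ∃ g : Fin 2 → MvPolynomial (Fin 2) ℤ,
    (∀ i, (g i).IsHomogeneous 1) ∧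
    Function.Bijective ⇑(MvPolynomial.aeval (R := ℤ) g) ∧
    Ideal.map (MvPolynomial.aeval (R := ℤ) g) I = J

/-! A graded isomorphism is a linear substitution `g = M *ᵥ X`, and surjectivity forces `M` to be
invertible over `ℤ`, i.e. `det M = ±1`. The substitution maps `x₂(x₁ + x₂)` into the target ideal,
whose only generator of degree at most `2` is `y₂(2y₁ + y₂)`, so `g₂(g₁ + g₂) = v • y₂(2y₁ + y₂)`.
Comparing `y₁y₂`-coefficients modulo `2` then shows that `det M` is even. -/

open Matrix

namespace MvPolynomial

variable {σ τ R : Type*}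

section CommSemiring
variable [CommSemiring R]

attribute [local instance] gradedAlgebra in
theorem homogeneousComponent_mul_of_isHomogeneous {h : MvPolynomial σ R} {m : ℕ}
    (hh : h.IsHomogeneous m) (u : MvPolynomial σ R) (k : ℕ) :
    homogeneousComponent k (u * h) =
      if m ≤ k then homogeneousComponent (k - m) u * h else 0 := by
  simp_rw [← decomposition.decompose'_apply]
  exact DirectSum.coe_decompose_mul_of_right_mem (homogeneousSubmodule σ R) k hh

theorem homogeneousComponent_aeval {g : σ → MvPolynomial τ R}
    (hg : ∀ i, (g i).IsHomogeneous 1) (p : MvPolynomial σ R) (k : ℕ) :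
    homogeneousComponent k (aeval g p) = aeval g (homogeneousComponent k p) := by
  conv_lhs => rw [← sum_homogeneousComponent p]
  simp only [map_sum]
  have hom (i : ℕ) : (aeval g (homogeneousComponent i p)).IsHomogeneous i := by
    simpa using (homogeneousComponent_isHomogeneous i p).aeval g hg
  rw [Finset.sum_eq_single k]
  · exact homogeneousComponent_eq_self (hom k)
  · intro i _ hik
    exact (homogeneousComponent_of_mem (hom i)).trans (if_neg hik.symm)
  · intro hk
    rw [homogeneousComponent_eq_zero k p (by simpa [Nat.lt_succ_iff] using hk), map_zero, map_zero]

theorem exists_eq_C_mul_of_mem_span_pair {f h p : MvPolynomial σ R} {m k : ℕ}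
    (hf : f.IsHomogeneous m) (hh : h.IsHomogeneous k) (hkm : k < m)
    (hp : p.IsHomogeneous k) (hmem : p ∈ Ideal.span {f, h}) : ∃ r, p = C r * h := by
  obtain ⟨u, v, rfl⟩ := Ideal.mem_span_pair.mp hmem
  refine ⟨coeff 0 v, ?_⟩
  rw [← homogeneousComponent_eq_self hp, map_add,
    homogeneousComponent_mul_of_isHomogeneous hf, if_neg hkm.not_ge,
    homogeneousComponent_mul_of_isHomogeneous hh, if_pos le_rfl, Nat.sub_self,
    homogeneousComponent_zero, zero_add]

theorem IsHomogeneous.exists_eq_sum_smul_X [Fintype σ] {p : MvPolynomial σ R}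
    (hp : p.IsHomogeneous 1) : ∃ c : σ → R, p = ∑ i, c i • X i := by
  have : p ∈ Submodule.span R (Set.range X) := by
    rw [← homogeneousSubmodule_one_eq_span_X]; exact hp
  obtain ⟨c, hc⟩ := (Submodule.mem_span_range_iff_exists_fun R).mp this
  exact ⟨c, hc.symm⟩

theorem exists_eq_map_C_mulVec_X [Fintype σ] {g : τ → MvPolynomial σ R}
    (hg : ∀ i, (g i).IsHomogeneous 1) : ∃ M : Matrix τ σ R, g = M.map C *ᵥ X := by
  choose M hM using fun i => (hg i).exists_eq_sum_smul_X
  refine ⟨of M, ?_⟩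
  funext i
  simp [hM i, mulVec, dotProduct, smul_eq_C_mul]

end CommSemiring

theorem isUnit_det_of_surjective_aeval [CommRing R] [Fintype σ] [DecidableEq σ]
    (M : Matrix σ σ R) (hM : Function.Surjective (aeval (R := R) (M.map C *ᵥ X))) :
    IsUnit M.det := by
  have hg : ∀ i, ((M.map C *ᵥ X) i).IsHomogeneous 1 := fun i =>
    IsHomogeneous.sum _ _ _ fun j _ => (isHomogeneous_X R j).C_mul _
  -- the degree-one part of a preimage of `X k` gives the `k`-th row of a left inverse of `M`
  have hinv (k : σ) : ∃ c : σ → R, ∀ j, ∑ i, c i * M i j = if k = j then 1 else 0 := by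
    obtain ⟨p, hp⟩ := hM (X k)
    obtain ⟨c, hc⟩ := (homogeneousComponent_isHomogeneous 1 p).exists_eq_sum_smul_X
    have := homogeneousComponent_aeval hg p 1
    rw [hp, homogeneousComponent_eq_self (isHomogeneous_X R k), hc] at this
    refine ⟨c, fun j => ?_⟩
    have := congrArg (coeff (Finsupp.single j 1)) this
    simpa [mulVec, dotProduct, coeff_sum, coeff_C_mul, coeff_X, Finsupp.single_left_inj]
      using this.symm
  choose c hc using hinv
  refine isUnit_det_of_left_inverse (B := of c) ?_
  ext k j
  simpa [mul_apply, one_apply] using hc k j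

end MvPolynomial

/-- With `ℓ₁ = p X₀ + q X₁` and `ℓ₂ = r X₀ + s X₁`, the `X₀X₁`-coefficient `ps + qr = 2v` of
`ℓ₁ ℓ₂` is congruent to `ps - qr` modulo `2`. -/
theorem two_dvd_det_of_mul_eq (M : Matrix (Fin 2) (Fin 2) ℤ) (v : ℤ)
    (h : (M.map C *ᵥ X) 1 * ((M.map C *ᵥ X) 0 + (M.map C *ᵥ X) 1) =
      C v * (X 1 * (2 * X 0 + X 1))) :
    2 ∣ M.det := by
  have at10 := congrArg (eval ![1, 0]) h
  have at01 := congrArg (eval ![0, 1]) h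
  have at11 := congrArg (eval ![1, 1]) h
  simp [mulVec, dotProduct, Fin.sum_univ_two, -mul_eq_zero] at at10 at01 at11
  refine ⟨v - M 0 1 * M 1 0 - M 1 0 * M 1 1, ?_⟩
  rw [det_fin_two]
  linear_combination at11 - at10 - at01

theorem stmt5 (n : ℕ) (hn : 1 < n) :
    ¬ IsGradedIso
        (Ideal.span {(X 0 : MvPolynomial (Fin 2) ℤ) ^ n * (X 0 + 2 * X 1), X 1 * (X 0 + X 1)})
        (Ideal.span {(X 0 : MvPolynomial (Fin 2) ℤ) ^ n * (X 0 + X 1), X 1 * (2 * X 0 + X 1)}) := by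
  rintro ⟨g, hg, hbij, hmap⟩
  obtain ⟨M, rfl⟩ := exists_eq_map_C_mulVec_X hg
  have hmem : aeval (M.map C *ᵥ X) (X 1 * (X 0 + X 1)) ∈
      Ideal.span {(X 0 : MvPolynomial (Fin 2) ℤ) ^ n * (X 0 + X 1), X 1 * (2 * X 0 + X 1)} :=
    hmap ▸ Ideal.mem_map_of_mem _ (Ideal.subset_span (by simp))
  have hdeg : (X 1 * (X 0 + X 1) : MvPolynomial (Fin 2) ℤ).IsHomogeneous 2 :=
    (isHomogeneous_X _ _).mul ((isHomogeneous_X _ _).add (isHomogeneous_X _ _))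
  obtain ⟨v, hv⟩ := exists_eq_C_mul_of_mem_span_pair
    ((isHomogeneous_X_pow _ n).mul ((isHomogeneous_X _ _).add (isHomogeneous_X _ _)))
    ((isHomogeneous_X _ _).mul (((isHomogeneous_X _ _).C_mul 2).add (isHomogeneous_X _ _)))
    (by omega) (by simpa using hdeg.aeval _ hg) hmem
  have htwo := two_dvd_det_of_mul_eq M v (by simpa using hv)
  rcases Int.isUnit_iff.mp (isUnit_det_of_surjective_aeval M hbij.2) with h | h <;> omega
end
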